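/- arXiv:2512.07013 — 6 statements merged into one kernel-verified Lean document; each statement's English description precedes it below -/
import Mathlib

section
/- Let a ≥ 0 and c ≠ 0 be real numbers. Then ∫ max(0, a + c·x) d(gaussianReal 0 1)(x) = a·(1 − Φ(−a/|c|)) + |c|·φ(−a/|c|). -/
open Filter Finset MeasureTheory ProbabilityTheory

/-- The cumulative distribution function of the standard Gaussian measure on `ℝ`. -/
noncomputable def gaussCDF (x : ℝ) : ℝ :=
  ((gaussianReal 0 1) (Set.Iic x)).toReal

/-- The density of the standard Gaussian measure on `ℝ`. -/
noncomputable def gaussPDF (x : ℝ) : ℝ :=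
  Real.exp (-x ^ 2 / 2) / Real.sqrt (2 * Real.pi)

/-!
Since a centred Gaussian is symmetric, `c` may be replaced by `|c| > 0`. For `b > 0` the function
`max 0 (a + b x)` vanishes left of `t = -a / b` and is affine right of it, so the expectation is
`a P(X > t) + b E[X; X > t]`; the partial mean is `φ(t)` because `-φ` is an antiderivative of
`x φ(x)`.
-/

open scoped NNReal Topology

lemma gaussianPDFReal_zero_one : gaussianPDFReal 0 1 = gaussPDF := by
  ext x
  simp [gaussianPDFReal, gaussPDF, div_eq_inv_mul]

lemma hasDerivAt_gaussPDF (x : ℝ) : HasDerivAt gaussPDF (-x * gaussPDF x) x := by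
  have h : HasDerivAt (fun y : ℝ => -y ^ 2 / 2) (-x) x :=
    ((hasDerivAt_pow 2 x).neg.div_const 2).congr_deriv (by ring)
  exact (h.exp.div_const _).congr_deriv (by simp only [gaussPDF]; ring)

lemma tendsto_gaussPDF_atTop : Tendsto gaussPDF atTop (𝓝 0) := by
  have h : Tendsto (fun x : ℝ => -x ^ 2 / 2) atTop atBot :=
    (tendsto_neg_atTop_atBot.comp (tendsto_pow_atTop two_ne_zero)).atBot_div_const two_pos
  have := (Real.tendsto_exp_atBot.comp h).div_const (Real.sqrt (2 * Real.pi))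
  rwa [zero_div] at this

lemma integrable_mul_gaussPDF : Integrable fun x => x * gaussPDF x := by
  have := (integrable_mul_exp_neg_mul_sq (b := 1 / 2) one_half_pos).div_const
    (Real.sqrt (2 * Real.pi))
  refine this.congr (ae_of_all _ fun x => ?_)
  simp only [gaussPDF]
  ring_nf

lemma integral_Ioi_mul_gaussPDF (t : ℝ) : ∫ x in Set.Ioi t, x * gaussPDF x = gaussPDF t := by
  rw [integral_Ioi_of_hasDerivAt_of_tendsto' (f := fun x => -gaussPDF x)
    (fun x _ => (hasDerivAt_gaussPDF x).neg.congr_deriv (by ring))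
    integrable_mul_gaussPDF.integrableOn (by simpa using tendsto_gaussPDF_atTop.neg)]
  simp

lemma setIntegral_Ioi_id_gaussianReal (t : ℝ) :
    ∫ x in Set.Ioi t, x ∂gaussianReal 0 1 = gaussPDF t := by
  rw [← integral_indicator measurableSet_Ioi, integral_gaussianReal_eq_integral_smul one_ne_zero,
    ← integral_Ioi_mul_gaussPDF, ← integral_indicator measurableSet_Ioi]
  congr 1 with x
  by_cases hx : x ∈ Set.Ioi t <;> simp [hx, gaussianPDFReal_zero_one, mul_comm]

lemma gaussianReal_real_Ioi (t : ℝ) : (gaussianReal 0 1).real (Set.Ioi t) = 1 - gaussCDF t := by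
  rw [← Set.compl_Iic, probReal_compl_eq_one_sub measurableSet_Iic]
  rfl

section Symmetry

variable {E : Type*} [NormedAddCommGroup E] [NormedSpace ℝ E] {v : ℝ≥0}

lemma integral_comp_neg_gaussianReal (f : ℝ → E) :
    ∫ x, f (-x) ∂gaussianReal 0 v = ∫ x, f x ∂gaussianReal 0 v := by
  have := (Homeomorph.neg ℝ).measurableEmbedding.integral_map (μ := gaussianReal 0 v) f
  simp only [Homeomorph.coe_neg] at this
  rw [← this, gaussianReal_map_neg, neg_zero]

lemma integral_comp_mul_gaussianReal_eq_abs (f : ℝ → E) (c : ℝ) :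
    ∫ x, f (c * x) ∂gaussianReal 0 v = ∫ x, f (|c| * x) ∂gaussianReal 0 v := by
  rcases le_or_gt 0 c with hc | hc
  · rw [abs_of_nonneg hc]
  · rw [abs_of_neg hc, ← integral_comp_neg_gaussianReal]
    simp

end Symmetry

lemma max_zero_add_mul_eq_indicator {a b : ℝ} (hb : 0 < b) (x : ℝ) :
    max 0 (a + b * x) = (Set.Ioi (-a / b)).indicator (fun y => a + b * y) x := by
  by_cases hx : -a / b < x
  · have : 0 < a + b * x := by rw [div_lt_iff₀ hb] at hx; linarith
    simp [hx, this.le]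
  · have : a + b * x ≤ 0 := by rw [not_lt, le_div_iff₀ hb] at hx; linarith
    simp [hx, this]

lemma integral_max_zero_add_mul_gaussianReal {a b : ℝ} (hb : 0 < b) :
    ∫ x, max 0 (a + b * x) ∂gaussianReal 0 1 =
      a * (1 - gaussCDF (-a / b)) + b * gaussPDF (-a / b) := by
  have hid : Integrable (fun x : ℝ => x) (gaussianReal 0 1) :=
    (memLp_id_gaussianReal 1).integrable le_rfl
  simp_rw [max_zero_add_mul_eq_indicator hb]
  rw [integral_indicator measurableSet_Ioi,
    integral_add (integrable_const a).integrableOn (hid.const_mul b).integrableOn,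
    setIntegral_const, integral_const_mul, setIntegral_Ioi_id_gaussianReal, gaussianReal_real_Ioi,
    smul_eq_mul, mul_comm (1 - _)]

theorem integral_max_zero_add_linear_gaussian_general
    (a c : ℝ) (hc : c ≠ 0) :
    ∫ x, max 0 (a + c * x) ∂(gaussianReal 0 1) =
      a * (1 - gaussCDF (-a / |c|)) + |c| * gaussPDF (-a / |c|) := by
  rw [integral_comp_mul_gaussianReal_eq_abs (fun y => max 0 (a + y)) c]
  exact integral_max_zero_add_mul_gaussianReal (abs_pos.mpr hc)

/-- Expectation of the rectified Gaussian: for `a ≥ 0`, `c ≠ 0`,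
`∫ max(0, a + c x) dN(0,1)(x) = a (1 - Φ(-a/|c|)) + |c| φ(-a/|c|)`. -/
theorem integral_max_zero_add_linear_gaussian
    (a c : ℝ) (ha : 0 ≤ a) (hc : c ≠ 0) :
    ∫ x, max 0 (a + c * x) ∂(gaussianReal 0 1) =
      a * (1 - gaussCDF (-a / |c|)) + |c| * gaussPDF (-a / |c|) :=
  integral_max_zero_add_linear_gaussian_general a c hc
end

section
/- Let a > 0 and c ≠ 0 be real numbers. The pushforward of gaussianReal 0 1 under the map x ↦ max(0, a + c·x) equals Φ(−a/|c|)·δ₀ + (gaussianReal a (c²)) restricted to the interval (0,∞), where δ₀ is the Dirac measure at 0 and gaussianReal a (c²) is the Gaussian measure on ℝ with mean a and variance c². In particular, the pushforward measure assigns mass Φ(−a/|c|) to the singleton {0}. -/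
/-! `a + c ε` is Gaussian with mean `a` and variance `c²`. The map `max 0` collapses the mass of
`(-∞, 0]` onto the atom at `0` and is the identity on `(0, ∞)`; after standardising, that mass is
`Φ(-a/|c|)`. -/

open Filter Finset MeasureTheory ProbabilityTheory

open Set

lemma gaussianReal_zero_one_map_const_add_mul (a c : ℝ) :
    (gaussianReal 0 1).map (fun x => a + c * x) = gaussianReal a ⟨c ^ 2, sq_nonneg c⟩ := by
  change (gaussianReal 0 1).map ((a + ·) ∘ (c * ·)) = _
  rw [← Measure.map_map (by fun_prop) (by fun_prop), gaussianReal_map_const_mul,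
    gaussianReal_map_const_add]
  congr 1
  · simp
  · ext; simp; rfl

lemma gaussianReal_Iic_eq_zero_one_Iic (a x : ℝ) {c : ℝ} (hc : c ≠ 0) :
    gaussianReal a ⟨c ^ 2, sq_nonneg c⟩ (Iic x) = gaussianReal 0 1 (Iic ((x - a) / |c|)) := by
  have hpre : (fun y => a + |c| * y) ⁻¹' Iic x = Iic ((x - a) / |c|) := by
    ext y
    simp [le_div_iff₀ (abs_pos.mpr hc), mul_comm, le_sub_iff_add_le']
  rw [← hpre, ← Measure.map_apply (by fun_prop) measurableSet_Iic,
    gaussianReal_zero_one_map_const_add_mul]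
  simp

lemma map_max_eq_smul_dirac_add_restrict {α : Type*} [LinearOrder α] [TopologicalSpace α]
    [OrderClosedTopology α] [MeasurableSpace α] [BorelSpace α] (ν : Measure α) (b : α) :
    ν.map (max b) = ν (Iic b) • Measure.dirac b + ν.restrict (Ioi b) := by
  have hmax : Measurable (max b : α → α) := (continuous_const.max continuous_id).measurable
  conv_lhs =>
    rw [← Measure.restrict_add_restrict_compl (μ := ν) (s := Iic b) measurableSet_Iic, compl_Iic]
  rw [Measure.map_add _ _ hmax]
  congr 1
  · rw [Measure.map_congr (f := max b) (g := fun _ => b)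
        ((ae_restrict_iff' measurableSet_Iic).2 (ae_of_all _ fun _ => max_eq_left)),
      Measure.map_const, Measure.restrict_apply_univ]
  · rw [Measure.map_congr (f := max b) (g := id)
        ((ae_restrict_iff' measurableSet_Ioi).2 (ae_of_all _ fun _ hx => max_eq_right hx.le)),
      Measure.map_id]

theorem map_rectified_gaussian_eq_truncated_general
    (a c : ℝ) (hc : c ≠ 0) :
    (Measure.map (fun x : ℝ => max 0 (a + c * x)) (gaussianReal 0 1) =
      (ENNReal.ofReal (gaussCDF (-a / |c|))) • Measure.dirac (0 : ℝ)
        + (gaussianReal a ⟨c ^ 2, sq_nonneg c⟩).restrict (Set.Ioi 0)) ∧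
    (Measure.map (fun x : ℝ => max 0 (a + c * x)) (gaussianReal 0 1)) {0}
      = ENNReal.ofReal (gaussCDF (-a / |c|)) := by
  have hatom :
      ENNReal.ofReal (gaussCDF (-a / |c|)) = gaussianReal a ⟨c ^ 2, sq_nonneg c⟩ (Iic 0) := by
    rw [gaussCDF, ENNReal.ofReal_toReal (measure_ne_top _ _),
      gaussianReal_Iic_eq_zero_one_Iic _ _ hc, zero_sub, neg_div]
  have hlaw : Measure.map (fun x : ℝ => max 0 (a + c * x)) (gaussianReal 0 1)
      = (gaussianReal a ⟨c ^ 2, sq_nonneg c⟩).map (max 0) := by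
    rw [← gaussianReal_zero_one_map_const_add_mul, Measure.map_map (by fun_prop) (by fun_prop)]
    rfl
  rw [hlaw, map_max_eq_smul_dirac_add_restrict, hatom]
  exact ⟨rfl, by simp⟩

/-- The law of the rectified Gaussian `max(0, a + c ε)`,
`ε ~ N(0,1)`, with `a > 0`, `c ≠ 0`, is the zero-truncated Gaussian:
an atom of mass `Φ(-a/|c|)` at `0` plus the Gaussian `N(a, c²)` restricted to
`(0, ∞)`. In particular, the pushforward assigns mass `Φ(-a/|c|)` to `{0}`. -/
theorem map_rectified_gaussian_eq_truncated
    (a c : ℝ) (ha : 0 < a) (hc : c ≠ 0) :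
    (Measure.map (fun x : ℝ => max 0 (a + c * x)) (gaussianReal 0 1) =
      (ENNReal.ofReal (gaussCDF (-a / |c|))) • Measure.dirac (0 : ℝ)
        + (gaussianReal a ⟨c ^ 2, sq_nonneg c⟩).restrict (Set.Ioi 0)) ∧
    (Measure.map (fun x : ℝ => max 0 (a + c * x)) (gaussianReal 0 1)) {0}
      = ENNReal.ofReal (gaussCDF (-a / |c|)) :=
  map_rectified_gaussian_eq_truncated_general a c hc
end

section
/- Let ζ₀ ≥ 0, ζ* > 0, γ > 0, σ > 0, and let (A_t), (B_t) be real sequences with A_t > 0 and B_t ≥ 0 for all t, such that A_t → +∞ and B_t → +∞. Define v̄_t = (ζ₀ + γ·ζ*·B_t)/(1 + γ·B_t), φ̄_t = γ·σ·A_t/(1 + γ·B_t), and E_t = v̄_t·(1 − Φ(−|v̄_t/φ̄_t|)) + |φ̄_t|·φ(−|v̄_t/φ̄_t|). Assume (ζ₀ + γ·ζ*·B_t)/(γ·σ·A_t) → L for some L ≥ 0 and A_t/B_t → ρ for some ρ ∈ ℝ. Then E_t → ζ*·(1 − Φ(−L)) + σ·φ(−L)·ρ as t → ∞. -/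
/-!
As `B t → ∞`, the posterior mean `v̄ t` tends to `ζ*` and, because `A t / B t → ρ`, the scale
`φ̄ t` tends to `σ ρ ≥ 0`. The common factor `1 + γ B t` cancels in `v̄ t / φ̄ t`, so this ratio is
the one assumed to tend to `L`. Continuity of `Φ` and `φ` then gives the limit of `E t`.
-/

open Filter Finset MeasureTheory ProbabilityTheory

open Set Topology

theorem continuous_measureReal_Iic (μ : Measure ℝ) [IsFiniteMeasure μ] [NullSingletonClass μ] :
    Continuous fun x => μ.real (Iic x) := by
  refine continuous_iff_continuousAt.2 fun x => ?_
  have h := (integrable_const (μ := μ) (1 : ℝ)).integrableOn.continuousOn_Iic_primitive_Iic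
    (a₀ := x + 1)
  simp only [setIntegral_const, smul_eq_mul, mul_one] at h
  exact h.continuousAt (Iic_mem_nhds (lt_add_one x))

theorem continuous_gaussCDF : Continuous gaussCDF :=
  haveI := nullSingletonClass_gaussianReal (μ := 0) one_ne_zero
  continuous_measureReal_Iic (gaussianReal 0 1)

theorem continuous_gaussPDF : Continuous gaussPDF := by
  unfold gaussPDF; fun_prop

theorem tendsto_div_one_add_mul_of_tendsto_div {ι : Type*} {l : Filter ι} {x b : ι → ℝ} {r γ : ℝ}
    (hγ : γ ≠ 0) (hb : Tendsto b l atTop) (hx : Tendsto (fun t => x t / b t) l (𝓝 r)) :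
    Tendsto (fun t => x t / (1 + γ * b t)) l (𝓝 (r / γ)) := by
  have hden : Tendsto (fun t => (b t)⁻¹ + γ) l (𝓝 γ) := by
    simpa using hb.inv_tendsto_atTop.add_const γ
  refine (hx.div hden hγ).congr' ?_
  filter_upwards [hb.eventually_ne_atTop 0] with t ht
  rw [Pi.div_apply]
  field_simp

theorem tendsto_mul_one_sub_gaussCDF_add_abs_mul_gaussPDF {ι : Type*} {l : Filter ι}
    {v s : ι → ℝ} {v₀ s₀ ℓ : ℝ}
    (hv : Tendsto v l (𝓝 v₀)) (hs : Tendsto s l (𝓝 s₀))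
    (hr : Tendsto (fun t => |v t / s t|) l (𝓝 ℓ)) :
    Tendsto (fun t => v t * (1 - gaussCDF (-|v t / s t|)) + |s t| * gaussPDF (-|v t / s t|)) l
      (𝓝 (v₀ * (1 - gaussCDF (-ℓ)) + |s₀| * gaussPDF (-ℓ))) :=
  (hv.mul (tendsto_const_nhds.sub ((continuous_gaussCDF.tendsto _).comp hr.neg))).add
    (hs.abs.mul ((continuous_gaussPDF.tendsto _).comp hr.neg))

theorem expected_MAP_limit_case1_general
    (ζ₀ ζs γ σ L ρ : ℝ) (hγ : 0 < γ) (hσ : 0 < σ)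
    (A B : ℕ → ℝ)
    (hAtop : Tendsto A atTop atTop) (hBtop : Tendsto B atTop atTop)
    (hL : 0 ≤ L)
    (hratio : Tendsto (fun t => (ζ₀ + γ * ζs * B t) / (γ * σ * A t)) atTop (nhds L))
    (hρ : Tendsto (fun t => A t / B t) atTop (nhds ρ)) :
    Tendsto (fun t =>
        ((ζ₀ + γ * ζs * B t) / (1 + γ * B t)) *
            (1 - gaussCDF (-|((ζ₀ + γ * ζs * B t) / (1 + γ * B t)) /
              (γ * σ * A t / (1 + γ * B t))|)) +
          |γ * σ * A t / (1 + γ * B t)| *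
            gaussPDF (-|((ζ₀ + γ * ζs * B t) / (1 + γ * B t)) /
              (γ * σ * A t / (1 + γ * B t))|))
      atTop (nhds (ζs * (1 - gaussCDF (-L)) + σ * gaussPDF (-L) * ρ)) := by
  have hBpos : ∀ᶠ t in atTop, 0 < B t := hBtop.eventually_gt_atTop 0
  have hρ_nonneg : 0 ≤ ρ := by
    refine ge_of_tendsto hρ ?_
    filter_upwards [hAtop.eventually_ge_atTop 0, hBpos] with t hA hB
    positivity
  have hv : Tendsto (fun t => (ζ₀ + γ * ζs * B t) / (1 + γ * B t)) atTop (𝓝 ζs) := by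
    have hnum : Tendsto (fun t => (ζ₀ + γ * ζs * B t) / B t) atTop (𝓝 (γ * ζs)) := by
      have h := (hBtop.inv_tendsto_atTop.const_mul ζ₀).add_const (γ * ζs)
      rw [mul_zero, zero_add] at h
      refine h.congr' ?_
      filter_upwards [hBpos] with t ht
      rw [Pi.inv_apply]
      field_simp
    simpa [hγ.ne'] using tendsto_div_one_add_mul_of_tendsto_div hγ.ne' hBtop hnum
  have hs : Tendsto (fun t => γ * σ * A t / (1 + γ * B t)) atTop (𝓝 (σ * ρ)) := by
    convert tendsto_div_one_add_mul_of_tendsto_div hγ.ne' hBtop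
      ((hρ.const_mul (γ * σ)).congr fun t => (mul_div_assoc (γ * σ) (A t) (B t)).symm) using 2
    field_simp
  have hr : Tendsto (fun t => |(ζ₀ + γ * ζs * B t) / (1 + γ * B t) /
      (γ * σ * A t / (1 + γ * B t))|) atTop (𝓝 L) := by
    refine (abs_of_nonneg hL ▸ hratio.abs).congr' ?_
    filter_upwards [hBpos] with t ht
    rw [div_div_div_cancel_right₀ (by positivity)]
  have := tendsto_mul_one_sub_gaussCDF_add_abs_mul_gaussPDF hv hs hr
  rwa [abs_of_nonneg (by positivity : 0 ≤ σ * ρ), mul_right_comm σ] at this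

/-- Case (1) of the convergence of the expected path-dependent
MAP estimator: if `A t → +∞`, `B t → +∞`,
`(ζ₀ + γ ζ* B t)/(γ σ A t) → L ≥ 0` and `A t / B t → ρ`, then
`E t → ζ* (1 - Φ(-L)) + σ φ(-L) ρ`. -/
theorem expected_MAP_limit_case1
    (ζ₀ ζs γ σ L ρ : ℝ) (hζ₀ : 0 ≤ ζ₀) (hζs : 0 < ζs) (hγ : 0 < γ) (hσ : 0 < σ)
    (A B : ℕ → ℝ) (hA : ∀ t, 0 < A t) (hB : ∀ t, 0 ≤ B t)
    (hAtop : Tendsto A atTop atTop) (hBtop : Tendsto B atTop atTop)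
    (hL : 0 ≤ L)
    (hratio : Tendsto (fun t => (ζ₀ + γ * ζs * B t) / (γ * σ * A t)) atTop (nhds L))
    (hρ : Tendsto (fun t => A t / B t) atTop (nhds ρ)) :
    Tendsto (fun t =>
        ((ζ₀ + γ * ζs * B t) / (1 + γ * B t)) *
            (1 - gaussCDF (-|((ζ₀ + γ * ζs * B t) / (1 + γ * B t)) /
              (γ * σ * A t / (1 + γ * B t))|)) +
          |γ * σ * A t / (1 + γ * B t)| *
            gaussPDF (-|((ζ₀ + γ * ζs * B t) / (1 + γ * B t)) /
              (γ * σ * A t / (1 + γ * B t))|))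
      atTop (nhds (ζs * (1 - gaussCDF (-L)) + σ * gaussPDF (-L) * ρ)) :=
  expected_MAP_limit_case1_general ζ₀ ζs γ σ L ρ hγ hσ A B hAtop hBtop hL hratio hρ
end

section
/- Let ζ₀ ≥ 0, ζ* > 0, γ > 0, σ > 0, and let (A_t), (B_t) be real sequences with A_t ≠ 0 and B_t ≥ 0 for all t, such that A_t → L₁ for some L₁ ∈ ℝ and B_t → +∞. Define v̄_t = (ζ₀ + γ·ζ*·B_t)/(1 + γ·B_t), φ̄_t = γ·σ·A_t/(1 + γ·B_t), and E_t = v̄_t·(1 − Φ(−|v̄_t/φ̄_t|)) + |φ̄_t|·φ(−|v̄_t/φ̄_t|). Then E_t → ζ* as t → ∞. -/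
/-!
Since `1 + γ B_t → ∞`, the location `v̄_t` tends to `ζ*` while the spread `φ̄_t` tends to `0`,
so `|v̄_t / φ̄_t| → ∞`. The Gaussian tail `Φ(-|v̄_t / φ̄_t|)` then vanishes, and the density term
is at most `|φ̄_t| / √(2π)`.
-/

open Filter Finset MeasureTheory ProbabilityTheory

open scoped Topology

lemma tendsto_gaussCDF_atBot : Tendsto gaussCDF atBot (𝓝 0) :=
  (tendsto_cdf_atBot (gaussianReal 0 1)).congr fun x => by rw [cdf_eq_real]; rfl

lemma norm_gaussPDF_le (x : ℝ) : ‖gaussPDF x‖ ≤ (Real.sqrt (2 * Real.pi))⁻¹ := by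
  have hexp : Real.exp (-x ^ 2 / 2) ≤ 1 := Real.exp_le_one_iff.mpr (by nlinarith [sq_nonneg x])
  rw [Real.norm_of_nonneg (by unfold gaussPDF; positivity), gaussPDF, div_eq_mul_inv]
  exact mul_le_of_le_one_left (by positivity) hexp

lemma tendsto_abs_div_atTop {ι : Type*} {l : Filter ι} {f g : ι → ℝ} {a : ℝ} (ha : a ≠ 0)
    (hf : Tendsto f l (𝓝 a)) (hg : Tendsto g l (𝓝 0)) (hg0 : ∀ᶠ i in l, g i ≠ 0) :
    Tendsto (fun i => |f i / g i|) l atTop := by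
  have habs_g : Tendsto (fun i => |g i|) l (𝓝[>] 0) :=
    tendsto_nhdsWithin_of_tendsto_nhds_of_eventually_within _ (by simpa using hg.abs)
      (hg0.mono fun i hi => abs_pos.mpr hi)
  refine (Tendsto.pos_mul_atTop (abs_pos.mpr ha) hf.abs habs_g.inv_tendsto_nhdsGT_zero).congr
    fun i => ?_
  rw [Pi.inv_apply, abs_div, div_eq_mul_inv]

/-- For `v ≥ 0`, the mean of the positive part of a Gaussian with mean `v` and standard
deviation `|s|`. -/
noncomputable def expectedMAP (v s : ℝ) : ℝ :=
  v * (1 - gaussCDF (-|v / s|)) + |s| * gaussPDF (-|v / s|)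

lemma tendsto_expectedMAP {ι : Type*} {l : Filter ι} {v s : ι → ℝ} {ζ : ℝ} (hζ : ζ ≠ 0)
    (hv : Tendsto v l (𝓝 ζ)) (hs : Tendsto s l (𝓝 0)) (hs0 : ∀ᶠ i in l, s i ≠ 0) :
    Tendsto (fun i => expectedMAP (v i) (s i)) l (𝓝 ζ) := by
  have hCDF : Tendsto (fun i => gaussCDF (-|v i / s i|)) l (𝓝 0) :=
    tendsto_gaussCDF_atBot.comp (tendsto_neg_atTop_atBot.comp (tendsto_abs_div_atTop hζ hv hs hs0))
  have hPDF : Tendsto (fun i => |s i| * gaussPDF (-|v i / s i|)) l (𝓝 0) :=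
    (by simpa using hs.abs : Tendsto (fun i => |s i|) l (𝓝 0)).zero_mul_isBoundedUnder_le
      (isBoundedUnder_of ⟨_, fun i => norm_gaussPDF_le _⟩)
  simpa [expectedMAP] using (hv.mul ((tendsto_const_nhds (x := (1 : ℝ))).sub hCDF)).add hPDF

lemma tendsto_add_mul_div_one_add_atTop (a c : ℝ) :
    Tendsto (fun x => (a + c * x) / (1 + x)) atTop (𝓝 c) := by
  have hlim : Tendsto (fun x => c + (a - c) / (1 + x)) atTop (𝓝 c) := by
    simpa using tendsto_const_nhds.add
      (tendsto_const_nhds.div_atTop (tendsto_atTop_add_const_left _ 1 (tendsto_id (α := ℝ))))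
  refine hlim.congr' ((eventually_ge_atTop 0).mono fun x hx => ?_)
  field_simp
  ring

theorem expected_MAP_limit_case3_general
    (ζ₀ ζs γ σ L₁ : ℝ) (hζs : 0 < ζs) (hγ : 0 < γ) (hσ : 0 < σ)
    (A B : ℕ → ℝ) (hA : ∀ t, A t ≠ 0)
    (hAlim : Tendsto A atTop (nhds L₁)) (hBtop : Tendsto B atTop atTop) :
    Tendsto (fun t =>
        ((ζ₀ + γ * ζs * B t) / (1 + γ * B t)) *
            (1 - gaussCDF (-|((ζ₀ + γ * ζs * B t) / (1 + γ * B t)) /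
              (γ * σ * A t / (1 + γ * B t))|)) +
          |γ * σ * A t / (1 + γ * B t)| *
            gaussPDF (-|((ζ₀ + γ * ζs * B t) / (1 + γ * B t)) /
              (γ * σ * A t / (1 + γ * B t))|))
      atTop (nhds ζs) := by
  have hγB : Tendsto (fun t => γ * B t) atTop atTop := hBtop.const_mul_atTop hγ
  have hD : Tendsto (fun t => 1 + γ * B t) atTop atTop := tendsto_atTop_add_const_left _ 1 hγB
  have hv : Tendsto (fun t => (ζ₀ + γ * ζs * B t) / (1 + γ * B t)) atTop (𝓝 ζs) :=
    ((tendsto_add_mul_div_one_add_atTop ζ₀ ζs).comp hγB).congr fun t => by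
      simp only [Function.comp_apply, mul_left_comm ζs, mul_assoc]
  have hs : Tendsto (fun t => γ * σ * A t / (1 + γ * B t)) atTop (𝓝 0) :=
    (tendsto_const_nhds.mul hAlim).div_atTop hD
  have hs0 : ∀ᶠ t in atTop, γ * σ * A t / (1 + γ * B t) ≠ 0 :=
    (hD.eventually_gt_atTop 0).mono fun t ht => by
      have := hA t
      positivity
  exact tendsto_expectedMAP hζs.ne' hv hs hs0

/-- Case (3) of the convergence of the expected path-dependent
MAP estimator: if `A t → L₁` finite and `B t → +∞`, then `E t → ζ*`. -/
theorem expected_MAP_limit_case3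
    (ζ₀ ζs γ σ L₁ : ℝ) (hζ₀ : 0 ≤ ζ₀) (hζs : 0 < ζs) (hγ : 0 < γ) (hσ : 0 < σ)
    (A B : ℕ → ℝ) (hA : ∀ t, A t ≠ 0) (hB : ∀ t, 0 ≤ B t)
    (hAlim : Tendsto A atTop (nhds L₁)) (hBtop : Tendsto B atTop atTop) :
    Tendsto (fun t =>
        ((ζ₀ + γ * ζs * B t) / (1 + γ * B t)) *
            (1 - gaussCDF (-|((ζ₀ + γ * ζs * B t) / (1 + γ * B t)) /
              (γ * σ * A t / (1 + γ * B t))|)) +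
          |γ * σ * A t / (1 + γ * B t)| *
            gaussPDF (-|((ζ₀ + γ * ζs * B t) / (1 + γ * B t)) /
              (γ * σ * A t / (1 + γ * B t))|))
      atTop (nhds ζs) :=
  expected_MAP_limit_case3_general ζ₀ ζs γ σ L₁ hζs hγ hσ A B hA hAlim hBtop
end

section
/- Let γ > 0 and ζ* ∈ ℝ, let (z_t)_{t≥0} be a real sequence, and define (V_t)_{t≥0} by V_0 ∈ ℝ and V_{t+1} = (V_t + γ·ζ*·z_t²)/(1 + γ·z_t²). (i) If z_t → L for some L ≠ 0, or if |z_t| → +∞, then V_t → ζ*. (ii) If z_t → 0, then V_t converges, and its limit equals ζ* + (V_0 − ζ*)·P, where P = lim_{t→∞} ∏_{h=0}^{t−1}(1 + γ·z_h²)^{−1} (this limit exists because the reciprocal partial products form a nonincreasing sequence in (0,1]). -/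
open Filter Finset Topology

/-!
Subtracting `ζ*` turns the recursion into `V (t+1) - ζ* = (1 + γ z_t²)⁻¹ (V t - ζ*)`, so
`V t = ζ* + (V 0 - ζ*) p t` with `p t` the partial product of the factors `(1 + γ z_h²)⁻¹ ∈ (0, 1]`.
Such products decrease to a limit `P`. When the factors converge to some `l < 1` (which is the case
if `z_t → L ≠ 0` or `|z_t| → ∞`), passing to the limit in `p (t+1) = a t * p t` gives `P = l P`,
hence `P = 0`.
-/

theorem eq_add_mul_prod_range_of_sub_succ {R : Type*} [CommRing R] {V a : ℕ → R} {c : R}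
    (h : ∀ t, V (t + 1) - c = a t * (V t - c)) (t : ℕ) :
    V t = c + (V 0 - c) * ∏ i ∈ range t, a i := by
  induction t with
  | zero => simp
  | succ t ih =>
    rw [prod_range_succ]
    linear_combination h t + a t * ih

theorem exists_tendsto_prod_range_of_mem_Icc {a : ℕ → ℝ} (ha : ∀ t, a t ∈ Set.Icc 0 1) :
    ∃ P, Tendsto (fun t => ∏ i ∈ range t, a i) atTop (𝓝 P) := by
  have hnonneg : ∀ t, 0 ≤ ∏ i ∈ range t, a i := fun t => prod_nonneg fun i _ => (ha i).1
  have hanti : Antitone fun t => ∏ i ∈ range t, a i := by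
    refine antitone_nat_of_succ_le fun t => ?_
    rw [prod_range_succ]
    exact mul_le_of_le_one_right (hnonneg t) (ha t).2
  exact ⟨_, tendsto_atTop_ciInf hanti ⟨0, by rintro _ ⟨t, rfl⟩; exact hnonneg t⟩⟩

theorem tendsto_prod_range_zero_of_tendsto_lt_one {a : ℕ → ℝ} {l : ℝ}
    (ha : ∀ t, a t ∈ Set.Icc 0 1) (hlim : Tendsto a atTop (𝓝 l)) (hl : l < 1) :
    Tendsto (fun t => ∏ i ∈ range t, a i) atTop (𝓝 0) := by
  obtain ⟨P, hP⟩ := exists_tendsto_prod_range_of_mem_Icc ha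
  have hshift : Tendsto (fun t => a t * ∏ i ∈ range t, a i) atTop (𝓝 P) := by
    simpa only [Function.comp_def, prod_range_succ, mul_comm] using hP.comp (tendsto_add_atTop_nat 1)
  have hfixed : P = l * P := tendsto_nhds_unique hshift (hlim.mul hP)
  have hP0 : P = 0 := by
    by_contra hne
    exact hl.ne (mul_right_cancel₀ hne (by rw [one_mul, ← hfixed]))
  rwa [← hP0]

theorem inv_one_add_mul_sq_mem_Icc {γ : ℝ} (hγ : 0 ≤ γ) (x : ℝ) :
    (1 + γ * x ^ 2)⁻¹ ∈ Set.Icc 0 1 :=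
  ⟨by positivity, inv_le_one_of_one_le₀ (le_add_of_nonneg_right (by positivity))⟩

/-- Convergence of the path-independent expected belief
dynamics `V (t+1) = (V t + γ ζ* (z t)²) / (1 + γ (z t)²)`:
(i) if `z t → L ≠ 0` or `|z t| → +∞`, then `V t → ζ*`;
(ii) if `z t → 0`, then the reciprocal partial products converge to some `P`
and `V t → ζ* + (V 0 - ζ*) P`. -/
theorem pathIndependent_belief_convergence
    (γ ζs : ℝ) (hγ : 0 < γ) (z : ℕ → ℝ) (V : ℕ → ℝ)
    (hrec : ∀ t, V (t + 1) = (V t + γ * ζs * (z t) ^ 2) / (1 + γ * (z t) ^ 2)) :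
    (((∃ L : ℝ, L ≠ 0 ∧ Tendsto z atTop (nhds L)) ∨
        Tendsto (fun t => |z t|) atTop atTop) →
      Tendsto V atTop (nhds ζs)) ∧
    (Tendsto z atTop (nhds 0) →
      ∃ P : ℝ,
        Tendsto (fun t => ∏ h ∈ Finset.range t, (1 + γ * (z h) ^ 2)⁻¹)
          atTop (nhds P) ∧
        Tendsto V atTop (nhds (ζs + (V 0 - ζs) * P))) := by
  have hfac : ∀ t, (1 + γ * z t ^ 2)⁻¹ ∈ Set.Icc 0 1 :=
    fun t => inv_one_add_mul_sq_mem_Icc hγ.le (z t)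
  have hV : ∀ t, V t = ζs + (V 0 - ζs) * ∏ h ∈ range t, (1 + γ * z h ^ 2)⁻¹ := by
    refine eq_add_mul_prod_range_of_sub_succ fun t => ?_
    have : 1 + γ * z t ^ 2 ≠ 0 := by positivity
    rw [hrec t]
    field_simp
    ring
  have hVlim : ∀ P, Tendsto (fun t => ∏ h ∈ range t, (1 + γ * z h ^ 2)⁻¹) atTop (𝓝 P) →
      Tendsto V atTop (𝓝 (ζs + (V 0 - ζs) * P)) := fun P hP => by
    simpa only [← hV] using (hP.const_mul (V 0 - ζs)).const_add ζs
  refine ⟨fun hz => ?_, fun _ => ?_⟩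
  · obtain ⟨l, hl, hlim⟩ :
        ∃ l < 1, Tendsto (fun t => (1 + γ * z t ^ 2)⁻¹) atTop (𝓝 l) := by
      rcases hz with ⟨L, hL, hzL⟩ | hz
      · refine ⟨_, inv_lt_one_of_one_lt₀ (lt_add_of_pos_right 1 (by positivity)),
          (((hzL.pow 2).const_mul γ).const_add 1).inv₀ (by positivity)⟩
      · refine ⟨0, one_pos, tendsto_inv_atTop_zero.comp (tendsto_atTop_add_const_left _ 1 ?_)⟩
        refine Tendsto.const_mul_atTop hγ ?_
        simpa only [Function.comp_def, sq_abs] using (tendsto_pow_atTop two_ne_zero).comp hz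
    simpa using hVlim 0 (tendsto_prod_range_zero_of_tendsto_lt_one hfac hlim hl)
  · obtain ⟨P, hP⟩ := exists_tendsto_prod_range_of_mem_Icc hfac
    exact ⟨P, hP, hVlim P hP⟩
end

section
/- Let n ≥ 1 and, for each i ∈ {1,…,n}, let χ_i > 0 and κ_i < 0 be real constants, and let d > 0. If w > 0 satisfies ∑_{i=1}^n χ_i · w^{κ_i} = d, then min_{1≤i≤n} (d/(n·χ_i))^{1/κ_i} ≤ w ≤ max_{1≤i≤n} (d/(n·χ_i))^{1/κ_i}. -/
open Filter Finset

/-! Averaging: since the `n` positive terms `χ i * w ^ κ i` sum to `d`, one of them is at most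
`d / n` and one is at least `d / n`. As `w ↦ χ * w ^ κ` is strictly decreasing for `κ < 0`,
`χ j * w ^ κ j ≤ d / n` says exactly `(d / (n χ j)) ^ (κ j)⁻¹ ≤ w`, and dually. -/

section Averaging

variable {ι K : Type*} [Fintype ι] [Nonempty ι] [Field K] [LinearOrder K] [IsStrictOrderedRing K]

theorem Fintype.exists_le_sum_div_card (f : ι → K) :
    ∃ i, f i ≤ (∑ j, f j) / Fintype.card ι := by
  have hcard : (0 : K) < Fintype.card ι := by exact_mod_cast Fintype.card_pos
  obtain ⟨i, -, hi⟩ := Finset.exists_le_of_sum_le univ_nonempty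
    (show ∑ j, f j ≤ ∑ _j : ι, (∑ j, f j) / Fintype.card ι by
      rw [sum_const, card_univ, nsmul_eq_mul, mul_div_cancel₀ _ hcard.ne'])
  exact ⟨i, hi⟩

theorem Fintype.exists_sum_div_card_le (f : ι → K) :
    ∃ i, (∑ j, f j) / Fintype.card ι ≤ f i := by
  obtain ⟨i, hi⟩ := Fintype.exists_le_sum_div_card (-f)
  exact ⟨i, by simpa [sum_neg_distrib, neg_div] using hi⟩

end Averaging

section NegativePower

variable {a c w κ : ℝ}

theorem rpow_inv_div_le_iff_mul_rpow_le (ha : 0 < a) (hc : 0 < c) (hw : 0 < w) (hκ : κ < 0) :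
    (a / c) ^ κ⁻¹ ≤ w ↔ c * w ^ κ ≤ a := by
  rw [Real.rpow_inv_le_iff_of_neg (div_pos ha hc) hw hκ, le_div_iff₀' hc]

theorem le_rpow_inv_div_iff_le_mul_rpow (ha : 0 < a) (hc : 0 < c) (hw : 0 < w) (hκ : κ < 0) :
    w ≤ (a / c) ^ κ⁻¹ ↔ a ≤ c * w ^ κ := by
  rw [Real.le_rpow_inv_iff_of_neg hw (div_pos ha hc) hκ, div_le_iff₀' hc]

end NegativePower

/-- Bounds on the equilibrium wage: if `w > 0` solves the
labor-market clearing condition `∑ i, χ i * w ^ κ i = d` with `χ i > 0`,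
`κ i < 0` and `d > 0`, then
`min_i (d / (n χ i))^(1/κ i) ≤ w ≤ max_i (d / (n χ i))^(1/κ i)`. -/
theorem equilibrium_wage_bounds
    (n : ℕ) (hn : 0 < n) (χ κ : Fin n → ℝ)
    (hχ : ∀ i, 0 < χ i) (hκ : ∀ i, κ i < 0)
    (d w : ℝ) (hd : 0 < d) (hw : 0 < w)
    (heq : ∑ i, χ i * w ^ (κ i) = d) :
    (Finset.univ.inf' ⟨⟨0, hn⟩, Finset.mem_univ _⟩
        (fun i => (d / (n * χ i)) ^ (κ i)⁻¹) ≤ w) ∧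
    (w ≤ Finset.univ.sup' ⟨⟨0, hn⟩, Finset.mem_univ _⟩
        (fun i => (d / (n * χ i)) ^ (κ i)⁻¹)) := by
  have : Nonempty (Fin n) := ⟨⟨0, hn⟩⟩
  have hdn : 0 < d / n := div_pos hd (Nat.cast_pos.mpr hn)
  have hdiv : ∀ i, d / (n * χ i) = d / n / χ i := fun i => (div_div _ _ _).symm
  have hmean : (∑ i, χ i * w ^ κ i) / Fintype.card (Fin n) = d / n := by
    rw [heq, Fintype.card_fin]
  obtain ⟨j, hj⟩ := Fintype.exists_le_sum_div_card fun i => χ i * w ^ κ i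
  obtain ⟨k, hk⟩ := Fintype.exists_sum_div_card_le fun i => χ i * w ^ κ i
  rw [hmean] at hj hk
  constructor
  · refine (inf'_le _ (mem_univ j)).trans ?_
    rw [hdiv]
    exact (rpow_inv_div_le_iff_mul_rpow_le hdn (hχ j) hw (hκ j)).2 hj
  · refine le_trans ?_ (le_sup' _ (mem_univ k))
    rw [hdiv]
    exact (le_rpow_inv_div_iff_le_mul_rpow hdn (hχ k) hw (hκ k)).2 hk
end
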